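/- arXiv:2309.14184 — 3 statements merged into one kernel-verified Lean document; each statement's English description precedes it below -/
import Mathlib

section
/- Let H̃ : ℝ^M × ℝ^M → ℝ be symmetric and ∇̄H̃ a polarized discrete gradient of H̃, i.e., H̃(v,w) - H̃(u,v) = (1/2)(w-u)ᵀ ∇̄H̃(u,v,w) for all u,v,w. If S is a skew-symmetric M×M real matrix and the sequence (uⁿ) satisfies (u^{n+2} - uⁿ)/(2Δt) = S ∇̄H̃(uⁿ, u^{n+1}, u^{n+2}) for all n ≥ 0, then H̃(uⁿ, u^{n+1}) = H̃(u⁰, u¹) for all n ≥ 0. -/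
/-!
The energy increment over one step is `½ ⟪uⁿ⁺² - uⁿ, ∇̄H̃⟫`, and the scheme makes `uⁿ⁺² - uⁿ` a
multiple of `S ∇̄H̃`; the quadratic form of a skew-symmetric matrix vanishes, so every increment
is zero.
-/

open Matrix

theorem Matrix.dotProduct_mulVec_self_eq_zero_of_transpose_eq_neg {ι R : Type*} [Fintype ι]
    [CommRing R] [IsAddTorsionFree R] {S : Matrix ι ι R} (hS : Sᵀ = -S) (x : ι → R) :
    x ⬝ᵥ S *ᵥ x = 0 :=
  self_eq_neg.mp <| calc
    x ⬝ᵥ S *ᵥ x = Sᵀ *ᵥ x ⬝ᵥ x := by rw [dotProduct_mulVec, mulVec_transpose]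
    _ = -(x ⬝ᵥ S *ᵥ x) := by rw [hS, neg_mulVec, neg_dotProduct, dotProduct_comm]

def IsPolarizedDiscreteGradient {ι : Type*} [Fintype ι] (H : (ι → ℝ) → (ι → ℝ) → ℝ)
    (dg : (ι → ℝ) → (ι → ℝ) → (ι → ℝ) → (ι → ℝ)) : Prop :=
  ∀ u v w, H v w - H u v = 1 / 2 * ((w - u) ⬝ᵥ dg u v w)

theorem IsPolarizedDiscreteGradient.apply_eq_of_sub_eq_smul_mulVec {ι : Type*} [Fintype ι]
    {H : (ι → ℝ) → (ι → ℝ) → ℝ} {dg : (ι → ℝ) → (ι → ℝ) → (ι → ℝ) → (ι → ℝ)}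
    (hdg : IsPolarizedDiscreteGradient H dg) {S : Matrix ι ι ℝ} (hS : Sᵀ = -S)
    {u v w : ι → ℝ} {c : ℝ} (h : w - u = c • S *ᵥ dg u v w) : H v w = H u v := by
  have hinc := hdg u v w
  rw [h, smul_dotProduct, dotProduct_comm,
    dotProduct_mulVec_self_eq_zero_of_transpose_eq_neg hS, smul_zero, mul_zero] at hinc
  linarith

theorem stmt4_general (M : ℕ) (Δt : ℝ) (hΔt : 0 < Δt)
    (S : Matrix (Fin M) (Fin M) ℝ) (hS : Sᵀ = -S)
    (Ht : (Fin M → ℝ) → (Fin M → ℝ) → ℝ)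
    (dg : (Fin M → ℝ) → (Fin M → ℝ) → (Fin M → ℝ) → (Fin M → ℝ))
    (hdg : ∀ u v w : Fin M → ℝ, Ht v w - Ht u v = (1/2) * ((w - u) ⬝ᵥ dg u v w))
    (u : ℕ → Fin M → ℝ)
    (hscheme : ∀ n : ℕ, (1/(2*Δt)) • (u (n+2) - u n)
      = S.mulVec (dg (u n) (u (n+1)) (u (n+2)))) :
    ∀ n : ℕ, Ht (u n) (u (n+1)) = Ht (u 0) (u 1) := by
  have step (n : ℕ) : Ht (u (n+1)) (u (n+2)) = Ht (u n) (u (n+1)) := by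
    have hincrement := hscheme n
    rw [one_div, inv_smul_eq_iff₀ (by positivity)] at hincrement
    exact IsPolarizedDiscreteGradient.apply_eq_of_sub_eq_smul_mulVec hdg hS hincrement
  intro n
  induction n with
  | zero => rfl
  | succ n ih => exact (step n).trans ih

/-- The two-step polarized discrete gradient scheme preserves the polarized energy. -/
theorem stmt4 (M : ℕ) (hM : 1 ≤ M) (Δt : ℝ) (hΔt : 0 < Δt)
    (S : Matrix (Fin M) (Fin M) ℝ) (hS : Sᵀ = -S)
    (Ht : (Fin M → ℝ) → (Fin M → ℝ) → ℝ)
    (hsymm : ∀ u v : Fin M → ℝ, Ht u v = Ht v u)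
    (dg : (Fin M → ℝ) → (Fin M → ℝ) → (Fin M → ℝ) → (Fin M → ℝ))
    (hdg : ∀ u v w : Fin M → ℝ, Ht v w - Ht u v = (1/2) * ((w - u) ⬝ᵥ dg u v w))
    (u : ℕ → Fin M → ℝ)
    (hscheme : ∀ n : ℕ, (1/(2*Δt)) • (u (n+2) - u n)
      = S.mulVec (dg (u n) (u (n+1)) (u (n+2)))) :
    ∀ n : ℕ, Ht (u n) (u (n+1)) = Ht (u 0) (u 1) :=
  stmt4_general M Δt hΔt S hS Ht dg hdg u hscheme
end

section
/- For the conformal implicit midpoint method (e^{X₁}u^{n+1} - e^{X₀}uⁿ)/Δt = S∇H((e^{X₁}u^{n+1} + e^{X₀}uⁿ)/2) with S skew-symmetric and X₁ = γΔt/2 = -X₀, if ⟨v, S∇H(v)⟩ = 0 for all v, then the quadratic invariant I(u) = uᵀu satisfies I(u^{n+1}) = e^{-2γΔt} I(uⁿ). -/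
open Matrix

/-- The conformal implicit midpoint method dissipates the quadratic invariant
`I(u) = uᵀu` at the exact rate `exp (-2γΔt)`, provided `⟨v, S ∇H(v)⟩ = 0` for all `v`. -/
theorem stmt13 (M : ℕ) (γ Δt : ℝ) (hΔt : Δt ≠ 0)
    (S : Matrix (Fin M) (Fin M) ℝ) (hS : Sᵀ = -S)
    (g : (Fin M → ℝ) → (Fin M → ℝ))
    (horth : ∀ v : Fin M → ℝ, v ⬝ᵥ S.mulVec (g v) = 0)
    (u0 u1 : Fin M → ℝ)
    (h : (1/Δt) • (Real.exp (γ*Δt/2) • u1 - Real.exp (-(γ*Δt)/2) • u0)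
      = S.mulVec (g ((1/2 : ℝ) •
          (Real.exp (γ*Δt/2) • u1 + Real.exp (-(γ*Δt)/2) • u0)))) :
    u1 ⬝ᵥ u1 = Real.exp (-2*γ*Δt) * (u0 ⬝ᵥ u0) := by
  set a : Fin M → ℝ := Real.exp (γ*Δt/2) • u1 with ha
  set b : Fin M → ℝ := Real.exp (-(γ*Δt)/2) • u0 with hb
  set w : Fin M → ℝ := (1/2 : ℝ) • (a + b) with hw
  have hdiff : a - b = Δt • S.mulVec (g w) := by
    have := congrArg (fun v => Δt • v) h
    simpa [smul_smul, hΔt] using this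
  have key : (a + b) ⬝ᵥ (a - b) = 0 := by
    have hab : a + b = (2:ℝ) • w := by
      rw [hw, smul_smul]; norm_num
    rw [hdiff, hab, smul_dotProduct, dotProduct_smul, horth w]
    simp
  have hexpand : a ⬝ᵥ a = b ⬝ᵥ b := by
    have : a ⬝ᵥ a - b ⬝ᵥ b = 0 := by
      have hc : b ⬝ᵥ a = a ⬝ᵥ b := dotProduct_comm b a
      rw [← key]
      simp only [add_dotProduct, dotProduct_sub]
      rw [hc]; ring
    linarith
  have h1 : a ⬝ᵥ a = Real.exp (γ*Δt) * (u1 ⬝ᵥ u1) := by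
    rw [ha, smul_dotProduct, dotProduct_smul, smul_smul, smul_eq_mul, ← Real.exp_add]
    ring_nf
  have h0 : b ⬝ᵥ b = Real.exp (-(γ*Δt)) * (u0 ⬝ᵥ u0) := by
    rw [hb, smul_dotProduct, dotProduct_smul, smul_smul, smul_eq_mul, ← Real.exp_add]
    ring_nf
  have hpos : Real.exp (γ*Δt) ≠ 0 := (Real.exp_pos _).ne'
  have := h1 ▸ h0 ▸ hexpand
  have hfin : u1 ⬝ᵥ u1 = Real.exp (-(γ*Δt)) / Real.exp (γ*Δt) * (u0 ⬝ᵥ u0) := by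
    field_simp at this ⊢
    linarith
  rw [hfin, ← Real.exp_sub]
  ring_nf
end

section
/- If (uⁿ) satisfies the two-step exponential Kahan scheme for damped Burgers, (e^{X₂}u^{n+2} - e^{X₀}uⁿ)/(2Δt) = -D₁[(e^{X₁}u^{n+1})⊙(e^{X₀}uⁿ) + (e^{X₂}u^{n+2})⊙(e^{X₁}u^{n+1})]/4 with X₂ = γΔt/2 = -X₀, X₁ = 0, then the discrete mass Cⁿ = 𝟙ᵀuⁿ satisfies e^{X₂}C^{n+2} = e^{X₀}Cⁿ, i.e., C^{n+2} = e^{-γΔt} Cⁿ. -/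
open Matrix

theorem one_dotProduct_eq_of_smul_sub_eq_smul_mulVec {𝕜 ι : Type*} [Field 𝕜] [Fintype ι]
    {D : Matrix ι ι 𝕜} (hD : ∀ v : ι → 𝕜, (1 : ι → 𝕜) ⬝ᵥ D *ᵥ v = 0)
    {c d : 𝕜} (hc : c ≠ 0) {a b w : ι → 𝕜} (h : c • (a - b) = d • D *ᵥ w) :
    (1 : ι → 𝕜) ⬝ᵥ a = (1 : ι → 𝕜) ⬝ᵥ b := by
  have hpair := congrArg ((1 : ι → 𝕜) ⬝ᵥ ·) h
  simp only [dotProduct_smul, dotProduct_sub, hD, smul_eq_mul, mul_zero] at hpair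
  exact sub_eq_zero.mp ((mul_eq_zero.mp hpair).resolve_left hc)

theorem eq_exp_neg_mul_of_exp_half_mul_eq {t x y : ℝ}
    (h : Real.exp (t / 2) * x = Real.exp (-t / 2) * y) : x = Real.exp (-t) * y := by
  have hsplit : Real.exp (-t / 2) = Real.exp (t / 2) * Real.exp (-t) := by
    rw [← Real.exp_add]; ring_nf
  rw [hsplit, mul_assoc] at h
  exact mul_left_cancel₀ (Real.exp_ne_zero _) h

theorem stmt17_general (M : ℕ) (γ Δt : ℝ) (hΔt : Δt ≠ 0)
    (D1 : Matrix (Fin M) (Fin M) ℝ)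
    (hones : ∀ v : Fin M → ℝ, (1 : Fin M → ℝ) ⬝ᵥ D1.mulVec v = 0)
    (u : ℕ → Fin M → ℝ)
    (hscheme : ∀ n : ℕ,
      (1/(2*Δt)) • (Real.exp (γ*Δt/2) • u (n+2) - Real.exp (-(γ*Δt)/2) • u n)
        = -(1/4 : ℝ) • D1.mulVec
            (u (n+1) * (Real.exp (-(γ*Δt)/2) • u n)
              + (Real.exp (γ*Δt/2) • u (n+2)) * u (n+1))) :
    ∀ n : ℕ, (1 : Fin M → ℝ) ⬝ᵥ u (n+2)
      = Real.exp (-(γ*Δt)) * ((1 : Fin M → ℝ) ⬝ᵥ u n) := by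
  intro n
  have hmass := one_dotProduct_eq_of_smul_sub_eq_smul_mulVec hones
    (one_div_ne_zero (mul_ne_zero two_ne_zero hΔt)) (hscheme n)
  rw [dotProduct_smul, dotProduct_smul, smul_eq_mul, smul_eq_mul] at hmass
  exact eq_exp_neg_mul_of_exp_half_mul_eq hmass

/-- The two-step exponential Kahan scheme for damped Burgers dissipates the discrete
mass exactly: `C^{n+2} = exp (-γΔt) Cⁿ`. -/
theorem stmt17 (M : ℕ) (hM : 3 ≤ M) (γ Δt : ℝ) (hΔt : Δt ≠ 0)
    (D1 : Matrix (Fin M) (Fin M) ℝ)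
    (hones : ∀ v : Fin M → ℝ, (1 : Fin M → ℝ) ⬝ᵥ D1.mulVec v = 0)
    (u : ℕ → Fin M → ℝ)
    (hscheme : ∀ n : ℕ,
      (1/(2*Δt)) • (Real.exp (γ*Δt/2) • u (n+2) - Real.exp (-(γ*Δt)/2) • u n)
        = -(1/4 : ℝ) • D1.mulVec
            (u (n+1) * (Real.exp (-(γ*Δt)/2) • u n)
              + (Real.exp (γ*Δt/2) • u (n+2)) * u (n+1))) :
    ∀ n : ℕ, (1 : Fin M → ℝ) ⬝ᵥ u (n+2)
      = Real.exp (-(γ*Δt)) * ((1 : Fin M → ℝ) ⬝ᵥ u n) :=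
  stmt17_general M γ Δt hΔt D1 hones u hscheme
end
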